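/- The convolution sequence b(n) = ∑_{k=1}^{n-1} a(k)a(n-k), with a(n) = 2(4n+1)!/((n+1)!(3n+2)!), satisfies the second-order relation b(n+1)·a(n)/(b(n)·a(n+1)) = (n(n^2+16n+27)(3n+5)(3n+4)(n+2)) / ((n-1)(n^2+14n+12)(3n+8)(3n+7)(n+3)) for all n ≥ 2. -/

import Mathlib

/-!
With `B = 1 + x B⁴` (the generating function of quaternary trees), `a` is the coefficient sequence
of `2B² - B³`, and the coefficients of `Bʳ` are the Raney numbers `r/(r+4k) C(r+4k, k)`, which
satisfy `Bʳ Bᑫ = Bʳ⁺ᑫ` as a Vandermonde-type convolution (proved from the Pascal-type recurrence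
`Bʳ⁺¹ = Bʳ + x Bʳ⁺⁴`). Hence `∑ a(k) a(n-k)` is the coefficient of `4B⁴ - 4B⁵ + B⁶`, a combination
of three closed-form terms, and `b(n)/a(n)` is an explicit rational function of `n`; the claimed
ratio is the quotient of its values at `n + 1` and `n`.
-/

open Filter Finset

noncomputable def a (n : ℕ) : ℝ :=
  2 * (Nat.factorial (4 * n + 1)) / ((Nat.factorial (n + 1)) * (Nat.factorial (3 * n + 2)))

noncomputable def b (n : ℕ) : ℝ := ∑ k ∈ Finset.Ico 1 n, a k * a (n - k)

open Nat

/-- `raney s r k = r / (r + (s + 1) k) * C(r + (s + 1) k, k)`, the coefficient of `x ^ k` in `B ^ r`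
where `B = 1 + x B ^ (s + 1)`; the step is written `s + 1` to avoid truncated subtraction. -/
noncomputable def raney (s r : ℕ) : ℕ → ℝ
  | 0 => 1
  | k + 1 => r * (r + s * (k + 1) + k)! / ((k + 1)! * (r + s * (k + 1))!)

section raney

variable (s : ℕ)

@[simp] lemma raney_zero_right (r : ℕ) : raney s r 0 = 1 := rfl

lemma raney_zero_succ (k : ℕ) : raney s 0 (k + 1) = 0 := by simp [raney]

lemma raney_succ_succ (r k : ℕ) :
    raney s (r + 1) (k + 1) = raney s r (k + 1) + raney s (r + s + 1) k := by
  cases k with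
  | zero => simp [raney, factorial_ne_zero]
  | succ j =>
    simp only [raney]
    rw [show r + 1 + s * (j + 1 + 1) + (j + 1) = (r + s * (j + 1 + 1) + (j + 1)) + 1 by ring,
      show r + 1 + s * (j + 1 + 1) = (r + s * (j + 1 + 1)) + 1 by ring,
      show r + s + 1 + s * (j + 1) + j = r + s * (j + 1 + 1) + (j + 1) by ring,
      show r + s + 1 + s * (j + 1) = (r + s * (j + 1 + 1)) + 1 by ring]
    simp only [Nat.factorial_succ (r + s * (j + 1 + 1) + (j + 1)),
      Nat.factorial_succ (r + s * (j + 1 + 1)), Nat.factorial_succ (j + 1)]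
    push_cast
    field_simp
    ring

theorem raney_add (r q n : ℕ) :
    raney s (r + q) n = ∑ x ∈ antidiagonal n, raney s r x.1 * raney s q x.2 := by
  induction n generalizing r q with
  | zero => simp
  | succ n ihn =>
    induction r with
    | zero => simp [Nat.sum_antidiagonal_succ, raney_zero_succ]
    | succ r ihr =>
      rw [Nat.sum_antidiagonal_succ] at ihr ⊢
      simp only [raney_succ_succ, add_mul, sum_add_distrib, ← ihn]
      rw [show r + 1 + q = (r + q) + 1 by ring, raney_succ_succ, ihr,
        show r + s + 1 + q = r + q + s + 1 by ring]
      simp only [raney_zero_right, one_mul]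
      ring

end raney

lemma raney_three_succ (r k : ℕ) :
    raney 3 r (k + 1) = r * (4 * k + (r + 3))! / ((k + 1)! * (3 * k + (r + 3))!) := by
  rw [raney, show r + 3 * (k + 1) + k = 4 * k + (r + 3) by ring,
    show r + 3 * (k + 1) = 3 * k + (r + 3) by ring]

lemma a_zero : a 0 = 1 := by norm_num [a]

lemma a_eq_raney (n : ℕ) : a n = 2 * raney 3 2 n - raney 3 3 n := by
  cases n with
  | zero => norm_num [a_zero]
  | succ k =>
    simp only [a, raney_three_succ, mul_add, Nat.factorial_succ]
    push_cast
    field_simp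
    ring

lemma sum_antidiagonal_a_mul_a (n : ℕ) :
    ∑ x ∈ antidiagonal n, a x.1 * a x.2 = 4 * raney 3 4 n - 4 * raney 3 5 n + raney 3 6 n := by
  have hexpand : ∀ x : ℕ × ℕ, a x.1 * a x.2 = 4 * (raney 3 2 x.1 * raney 3 2 x.2)
      - 2 * (raney 3 2 x.1 * raney 3 3 x.2) - 2 * (raney 3 3 x.1 * raney 3 2 x.2)
      + raney 3 3 x.1 * raney 3 3 x.2 := fun x => by rw [a_eq_raney, a_eq_raney]; ring
  simp only [hexpand, sum_add_distrib, sum_sub_distrib, ← mul_sum, ← raney_add]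
  ring

lemma b_eq_sum_antidiagonal_sub (n : ℕ) (hn : 1 ≤ n) : b n = ∑ x ∈ antidiagonal n, a x.1 * a x.2 - 2 * a n := by
  rw [Nat.sum_antidiagonal_eq_sum_range_succ_mk, sum_range_succ, sum_range_eq_add_Ico _ hn, b]
  simp only [a_zero, tsub_zero, one_mul, tsub_self, mul_one]
  ring

lemma b_div_a (n : ℕ) (hn : 1 ≤ n) :
    b n / a n = 10 * ((n : ℝ) - 1) * ((n : ℝ) ^ 2 + 14 * n + 12)
      / (3 * (3 * (n : ℝ) + 5) * (3 * n + 4) * (n + 2)) := by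
  obtain ⟨m, rfl⟩ := Nat.exists_eq_add_of_le' hn
  rw [b_eq_sum_antidiagonal_sub _ hn, sum_antidiagonal_a_mul_a]
  simp only [a, raney_three_succ, mul_add, Nat.factorial_succ]
  push_cast
  field_simp
  ring

lemma a_pos (n : ℕ) : 0 < a n := by
  unfold a
  positivity

theorem stmt17 (n : ℕ) (hn : 2 ≤ n) :
    (b (n + 1) * a n) / (b n * a (n + 1)) =
      ((n : ℝ) * ((n : ℝ)^2 + 16 * n + 27) * (3 * n + 5) * (3 * n + 4) * (n + 2)) /
        (((n : ℝ) - 1) * ((n : ℝ)^2 + 14 * n + 12) * (3 * n + 8) * (3 * n + 7) * (n + 3)) := by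
  have ha := (a_pos n).ne'
  have ha' := (a_pos (n + 1)).ne'
  rw [← div_mul_cancel₀ (b n) ha, ← div_mul_cancel₀ (b (n + 1)) ha', b_div_a n (by omega),
    b_div_a (n + 1) (by omega)]
  push_cast
  field_simp
  ring
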